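/- Let K be a perfectoid field of characteristic p and R a Banach K-algebra such that R° is open and bounded. Then R is a perfectoid K-algebra if and only if R is a perfect ring (the p-power Frobenius R → R is bijective). -/
import Mathlib


/-- An element of a normed ring is power-bounded. -/
def PowerBounded {R : Type*} [SeminormedRing R] (x : R) : Prop :=
  ∃ C : ℝ, ∀ n : ℕ, ‖x ^ n‖ ≤ C

/-- A perfectoid field, encoded as a complete nontrivially normed (multiplicative, i.e.
rank-1) ultrametric field whose norm is nondiscrete and such that Frobenius is surjective
on `K°/p`.  (Completeness is imposed separately via `CompleteSpace K`.) -/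
def IsPerfectoidNormedField (K : Type*) [NontriviallyNormedField K] (p : ℕ) : Prop :=
  IsUltrametricDist K ∧
  (¬ ∃ γ : ℝ, ∀ x : K, x ≠ 0 → ∃ n : ℤ, ‖x‖ = γ ^ n) ∧
  ‖(p : K)‖ < 1 ∧
  (∀ x : K, ‖x‖ ≤ 1 → ∃ y : K, ‖y‖ ≤ 1 ∧ ‖x - y ^ p‖ ≤ ‖(p : K)‖)

/-- A perfectoid `K`-algebra: a Banach `K`-algebra (completeness imposed separately)
such that the set `R°` of power-bounded elements is open and bounded, and Frobenius is
surjective on `R°/ϖ`. -/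
def IsPerfectoidAlgebra (K : Type*) (R : Type*) [NontriviallyNormedField K]
    [NormedCommRing R] [NormedAlgebra K R] (p : ℕ) (ϖ : K) : Prop :=
  IsOpen {x : R | PowerBounded x} ∧
  (∃ C : ℝ, ∀ x : R, PowerBounded x → ‖x‖ ≤ C) ∧
  (∀ x : R, PowerBounded x →
    ∃ y z : R, PowerBounded y ∧ PowerBounded z ∧ x - y ^ p = algebraMap K R ϖ * z)

lemma powerBounded_zero {R : Type*} [SeminormedRing R] : PowerBounded (0 : R) := by
  refine ⟨‖(1 : R)‖, fun n => ?_⟩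
  cases n with
  | zero => simp
  | succ n => simp [zero_pow (Nat.succ_ne_zero n), norm_nonneg]

lemma powerBounded_of_pow {R : Type*} [SeminormedRing R] {p : ℕ} (hp : p ≠ 0) {y : R}
    (h : PowerBounded (y ^ p)) : PowerBounded y := by
  obtain ⟨C, hC⟩ := h
  have hC0 : 0 ≤ C := le_trans (norm_nonneg _) (hC 0)
  refine ⟨C * ∑ r ∈ Finset.range p, ‖y ^ r‖, fun n => ?_⟩
  have h1 : y ^ n = (y ^ p) ^ (n / p) * y ^ (n % p) := by
    rw [← pow_mul, ← pow_add, Nat.div_add_mod]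
  have h2 : ‖y ^ (n % p)‖ ≤ ∑ r ∈ Finset.range p, ‖y ^ r‖ :=
    Finset.single_le_sum (fun i _ => norm_nonneg _)
      (Finset.mem_range.mpr (Nat.mod_lt _ (Nat.pos_of_ne_zero hp)))
  calc ‖y ^ n‖ ≤ ‖(y ^ p) ^ (n / p)‖ * ‖y ^ (n % p)‖ := h1 ▸ norm_mul_le _ _
    _ ≤ C * ∑ r ∈ Finset.range p, ‖y ^ r‖ :=
      mul_le_mul (hC _) h2 (norm_nonneg _) hC0

lemma exists_pow_eq_of_powerBounded
    {K : Type*} [NontriviallyNormedField K]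
    {R : Type*} [NormedCommRing R] [NormedAlgebra K R] [CompleteSpace R]
    {p : ℕ} (hp : p.Prime) [CharP R p]
    {ϖ π : K} (hπ : π ^ p = ϖ) (hϖ1 : ‖ϖ‖ < 1)
    {C : ℝ} (hC : ∀ x : R, PowerBounded x → ‖x‖ ≤ C)
    (hstep : ∀ x : R, PowerBounded x →
      ∃ y z : R, PowerBounded y ∧ PowerBounded z ∧ x - y ^ p = algebraMap K R ϖ * z)
    (x : R) (hx : PowerBounded x) : ∃ y : R, y ^ p = x := by
  haveI := Fact.mk hp
  have hπ1 : ‖π‖ < 1 := by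
    by_contra h
    push_neg at h
    have h2 : (1 : ℝ) ≤ ‖π‖ ^ p := one_le_pow₀ h
    rw [← norm_pow, hπ] at h2
    linarith
  choose Y Z hY hZ hE using hstep
  let G : {w : R // PowerBounded w} → {w : R // PowerBounded w} := fun w => ⟨Z w w.2, hZ w w.2⟩
  let seq : ℕ → {w : R // PowerBounded w} := fun n => G^[n] ⟨x, hx⟩
  let yseq : ℕ → R := fun n => Y (seq n) (seq n).2
  have hseq_succ : ∀ n, (seq (n + 1) : R) = Z (seq n) (seq n).2 := by
    intro n
    show ((G^[n + 1] ⟨x, hx⟩ : {w : R // PowerBounded w}) : R) = _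
    rw [Function.iterate_succ_apply']
  have hseq0 : (seq 0 : R) = x := rfl
  have key : ∀ n, x - (∑ i ∈ Finset.range n, π ^ i • yseq i) ^ p = ϖ ^ n • (seq n : R) := by
    intro n
    induction n with
    | zero => simp [hseq0, zero_pow hp.ne_zero]
    | succ n ih =>
      have h1 : (π ^ n • yseq n) ^ p = ϖ ^ n • (yseq n) ^ p := by
        rw [smul_pow, pow_right_comm, hπ]
      have hE' : (seq n : R) - yseq n ^ p = algebraMap K R ϖ * ((seq (n + 1) : R)) := by
        rw [hseq_succ]; exact hE (seq n) (seq n).2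
      rw [Finset.sum_range_succ, add_pow_char, h1, sub_add_eq_sub_sub, ih, ← smul_sub,
        hE', ← Algebra.smul_def, smul_smul, ← pow_succ]
  set f : ℕ → R := fun i => π ^ i • yseq i with hf
  have hnorm : ∀ i, ‖f i‖ ≤ C * ‖π‖ ^ i := by
    intro i
    rw [hf]
    simp only
    rw [norm_smul, norm_pow, mul_comm]
    exact mul_le_mul_of_nonneg_right (hC _ (hY _ _)) (by positivity)
  have hsum : Summable f := by
    apply Summable.of_norm
    exact Summable.of_nonneg_of_le (fun i => norm_nonneg _) hnorm
      ((summable_geometric_of_lt_one (norm_nonneg π) hπ1).mul_left C)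
  refine ⟨∑' i, f i, ?_⟩
  have htend := hsum.hasSum.tendsto_sum_nat
  have h2 : Filter.Tendsto (fun n => x - (∑ i ∈ Finset.range n, f i) ^ p) Filter.atTop
      (nhds (x - (∑' i, f i) ^ p)) := Filter.Tendsto.const_sub _ (htend.pow p)
  have h3 : Filter.Tendsto (fun n => x - (∑ i ∈ Finset.range n, f i) ^ p) Filter.atTop
      (nhds 0) := by
    simp only [key]
    apply squeeze_zero_norm (a := fun n => C * ‖ϖ‖ ^ n)
    · intro n
      rw [norm_smul, norm_pow, mul_comm]
      exact mul_le_mul_of_nonneg_right (hC _ (seq n).2) (by positivity)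
    · simpa using (tendsto_pow_atTop_nhds_zero_of_lt_one (norm_nonneg ϖ) hϖ1).const_mul C
  exact (sub_eq_zero.mp (tendsto_nhds_unique h2 h3)).symm

/-- Let `K` be a perfectoid field of characteristic `p` and `R` a Banach `K`-algebra such
that `R°` is open and bounded.  Then `R` is a perfectoid `K`-algebra if and only if `R`
is a perfect ring, i.e. the `p`-power Frobenius `R → R` is bijective. -/
theorem perfectoid_iff_perfect_char_p
    (K : Type*) [NontriviallyNormedField K] [CompleteSpace K]
    (p : ℕ) (hp : p.Prime) [CharP K p] (hK : IsPerfectoidNormedField K p)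
    (R : Type*) [NormedCommRing R] [NormedAlgebra K R] [CompleteSpace R] [IsUltrametricDist R]
    (ϖ : K) (hϖ0 : ϖ ≠ 0) (hϖ1 : ‖ϖ‖ < 1)
    (hopen : IsOpen {x : R | PowerBounded x})
    (hbdd : ∃ C : ℝ, ∀ x : R, PowerBounded x → ‖x‖ ≤ C) :
    IsPerfectoidAlgebra K R p ϖ ↔ Function.Bijective (fun x : R => x ^ p) := by
  obtain ⟨C, hC⟩ := hbdd
  rcases subsingleton_or_nontrivial R with hR | hR
  · constructor
    · intro _
      exact ⟨fun a b _ => Subsingleton.elim a b, fun x => ⟨x, Subsingleton.elim _ _⟩⟩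
    · intro _
      exact ⟨hopen, ⟨C, hC⟩, fun x hx =>
        ⟨0, 0, powerBounded_zero, powerBounded_zero, Subsingleton.elim _ _⟩⟩
  · haveI : CharP R p := charP_of_injective_algebraMap (algebraMap K R).injective p
    haveI := Fact.mk hp
    -- `(p : K) = 0`, so the field axiom gives exact `p`-th roots in the unit ball of `K`.
    have hpK : ‖(p : K)‖ = 0 := by rw [CharP.cast_eq_zero K p, norm_zero]
    have hroot : ∀ a : K, ‖a‖ ≤ 1 → ∃ b : K, b ^ p = a := by
      intro a ha
      obtain ⟨y, _, hy2⟩ := hK.2.2.2 a ha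
      rw [hpK] at hy2
      have h0 : a - y ^ p = 0 := norm_eq_zero.mp (le_antisymm hy2 (norm_nonneg _))
      exact ⟨y, (sub_eq_zero.mp h0).symm⟩
    -- R is reduced: if w ^ p = 0 then w = 0.
    have hreduced : ∀ w : R, w ^ p = 0 → w = 0 := by
      intro w hw
      by_contra hw0
      have hpb : ∀ t : K, PowerBounded (t • w) := by
        intro t
        refine ⟨∑ r ∈ Finset.range p, ‖(t • w) ^ r‖, fun n => ?_⟩
        rcases lt_or_ge n p with hn | hn
        · exact Finset.single_le_sum (fun i _ => norm_nonneg _) (Finset.mem_range.mpr hn)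
        · have : (t • w) ^ n = 0 := by
            have : w ^ n = 0 := by
              rw [show n = p + (n - p) by omega, pow_add, hw, zero_mul]
            rw [smul_pow, this, smul_zero]
          rw [this, norm_zero]
          exact Finset.sum_nonneg fun i _ => norm_nonneg _
      have hb : ∀ t : K, ‖t‖ * ‖w‖ ≤ C := by
        intro t
        have := hC _ (hpb t)
        rwa [norm_smul] at this
      obtain ⟨t, ht⟩ := NormedField.exists_lt_norm K (C / ‖w‖)
      have hw' : 0 < ‖w‖ := norm_pos_iff.mpr hw0
      have := hb t
      rw [← le_div_iff₀ hw'] at this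
      linarith
    have hinj : Function.Injective (fun x : R => x ^ p) := by
      intro a b hab
      simp only at hab
      have : (a - b) ^ p = 0 := by rw [sub_pow_char, hab, sub_self]
      exact sub_eq_zero.mp (hreduced _ this)
    constructor
    · rintro ⟨-, -, hstep⟩
      refine ⟨hinj, fun x => ?_⟩
      -- scale x into the power-bounded (open) set
      obtain ⟨ε, hε, hball⟩ := Metric.isOpen_iff.mp hopen 0 powerBounded_zero
      obtain ⟨t, ht0, htlt⟩ := NormedField.exists_norm_lt K
        (lt_min one_pos (div_pos hε (by positivity : (0:ℝ) < ‖x‖ + 1)))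
      have ht1 : ‖t‖ < 1 := lt_of_lt_of_le htlt (min_le_left _ _)
      have ht2 : ‖t‖ < ε / (‖x‖ + 1) := lt_of_lt_of_le htlt (min_le_right _ _)
      have htne : t ≠ 0 := fun h => by simp [h] at ht0
      have hsmall : ‖t ^ p • x‖ < ε := by
        rw [norm_smul, norm_pow]
        calc ‖t‖ ^ p * ‖x‖ ≤ ‖t‖ * (‖x‖ + 1) := by
              apply mul_le_mul (pow_le_of_le_one (norm_nonneg t) ht1.le hp.ne_zero)
                (by linarith [norm_nonneg x]) (norm_nonneg x) (norm_nonneg t)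
          _ < (ε / (‖x‖ + 1)) * (‖x‖ + 1) := by
              apply mul_lt_mul_of_pos_right ht2 (by positivity)
          _ = ε := div_mul_cancel₀ _ (by positivity)
      have hpb : PowerBounded (t ^ p • x) := by
        have : t ^ p • x ∈ Metric.ball (0 : R) ε := by
          simpa [Metric.mem_ball, dist_zero_right] using hsmall
        exact hball this
      obtain ⟨π, hπ⟩ := hroot ϖ hϖ1.le
      obtain ⟨y, hy⟩ := exists_pow_eq_of_powerBounded hp hπ hϖ1 hC hstep _ hpb
      refine ⟨t⁻¹ • y, ?_⟩
      simp only
      rw [smul_pow, hy, smul_smul, ← mul_pow, inv_mul_cancel₀ htne, one_pow, one_smul]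
    · rintro ⟨-, hsurj⟩
      refine ⟨hopen, ⟨C, hC⟩, fun x hx => ?_⟩
      obtain ⟨y, hy⟩ := hsurj x
      simp only at hy
      refine ⟨y, 0, powerBounded_of_pow hp.ne_zero (hy.symm ▸ hx), powerBounded_zero, ?_⟩
      rw [hy, sub_self, mul_zero]
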